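/- arXiv:2102.04571 — 3 statements merged into one kernel-verified Lean document; each statement's English description precedes it below -/
import Mathlib

section
/- For every real number s > 0 and every integer k ≥ 2, one has ((k^2 - 1)^(2s)) / ((k+1)^(2s) - (k-1)^(2s)) ≤ k^(2s+1) / (2s). -/
/-!
Write `t = 2s`. Bounding `1 - x ≤ e⁻ˣ` and `1 + t x ≤ eᵗˣ` gives `(1 - x)ᵗ (1 + t x) ≤ 1`, which at
`x = 1/k` reads `(k - 1)ᵗ (k + t) ≤ kᵗ⁺¹`, i.e. `t (k - 1)ᵗ ≤ k (kᵗ - (k - 1)ᵗ)`. Multiplying by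
`(k + 1)ᵗ ≥ kᵗ` yields `t (k² - 1)ᵗ ≤ kᵗ⁺¹ ((k + 1)ᵗ - (k - 1)ᵗ)`.
-/

open Real

theorem one_sub_rpow_mul_one_add_le_one {x t : ℝ} (hx₀ : 0 ≤ x) (hx₁ : x ≤ 1) (ht : 0 ≤ t) :
    (1 - x) ^ t * (1 + t * x) ≤ 1 := by
  have h_sub : (1 - x) ^ t ≤ exp (-(t * x)) := by
    calc (1 - x) ^ t ≤ exp (-x) ^ t := by
          gcongr
          linarith [add_one_le_exp (-x)]
      _ = exp (-(t * x)) := by rw [← exp_mul]; ring_nf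
  have h_add : 1 + t * x ≤ exp (t * x) := by linarith [add_one_le_exp (t * x)]
  calc (1 - x) ^ t * (1 + t * x) ≤ exp (-(t * x)) * exp (t * x) := by
        gcongr
    _ = 1 := by rw [← exp_add, neg_add_cancel, exp_zero]

theorem sub_one_rpow_mul_add_le_rpow_add_one {K t : ℝ} (hK : 1 ≤ K) (ht : 0 ≤ t) :
    (K - 1) ^ t * (K + t) ≤ K ^ (t + 1) := by
  have hK₀ : 0 < K := by linarith
  have h_scaled := one_sub_rpow_mul_one_add_le_one (inv_nonneg.2 hK₀.le) (inv_le_one_of_one_le₀ hK) ht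
  have h_sub : K - 1 = K * (1 - K⁻¹) := by field_simp
  have h_add : K + t = K * (1 + t * K⁻¹) := by field_simp
  rw [h_sub, h_add, mul_rpow hK₀.le (by linarith [inv_le_one_of_one_le₀ hK]), rpow_add hK₀, rpow_one]
  calc K ^ t * (1 - K⁻¹) ^ t * (K * (1 + t * K⁻¹))
      = K ^ t * K * ((1 - K⁻¹) ^ t * (1 + t * K⁻¹)) := by ring
    _ ≤ K ^ t * K * 1 := by gcongr
    _ = K ^ t * K := mul_one _

theorem sq_sub_one_rpow_div_le {K t : ℝ} (hK : 1 ≤ K) (ht : 0 < t) :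
    (K ^ 2 - 1) ^ t / ((K + 1) ^ t - (K - 1) ^ t) ≤ K ^ (t + 1) / t := by
  have hK₀ : 0 < K := by linarith
  have hgap : (K - 1) ^ t < (K + 1) ^ t := by gcongr; linarith
  have hmono : K ^ t ≤ (K + 1) ^ t := by gcongr; linarith
  have hkey := sub_one_rpow_mul_add_le_rpow_add_one hK ht.le
  rw [rpow_add hK₀, rpow_one] at hkey
  have hkey' : (K - 1) ^ t * t ≤ K * (K ^ t - (K - 1) ^ t) := by linarith
  rw [div_le_div_iff₀ (by linarith) ht, show K ^ 2 - 1 = (K - 1) * (K + 1) by ring,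
    mul_rpow (by linarith) (by linarith), rpow_add hK₀, rpow_one]
  calc (K - 1) ^ t * (K + 1) ^ t * t
      = (K + 1) ^ t * ((K - 1) ^ t * t) := by ring
    _ ≤ (K + 1) ^ t * (K * (K ^ t - (K - 1) ^ t)) := by gcongr
    _ = K * (K ^ t * (K + 1) ^ t - (K + 1) ^ t * (K - 1) ^ t) := by ring
    _ ≤ K * (K ^ t * (K + 1) ^ t - K ^ t * (K - 1) ^ t) := by gcongr
    _ = K ^ t * K * ((K + 1) ^ t - (K - 1) ^ t) := by ring

/-- For every real `s > 0` and every integer `k ≥ 2`,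
`((k² - 1)^(2s)) / ((k+1)^(2s) - (k-1)^(2s)) ≤ k^(2s+1) / (2s)`. -/
theorem stmt_0 (s : ℝ) (hs : 0 < s) (k : ℤ) (hk : 2 ≤ k) :
    ((k : ℝ) ^ 2 - 1) ^ (2 * s) / (((k : ℝ) + 1) ^ (2 * s) - ((k : ℝ) - 1) ^ (2 * s))
      ≤ (k : ℝ) ^ (2 * s + 1) / (2 * s) :=
  sq_sub_one_rpow_div_le (by exact_mod_cast (by omega : 1 ≤ k)) (by positivity)
end

section
/- Let H be a complex Hilbert space, and for each integer k let u_k ∈ H. Suppose κ > 0, s > 0, m ≥ 1, and for every k ≥ m the inequality k^{2s}(a_k + b_k) + (κ/2)k^{2s+1}(‖u_k‖² + ‖u_{-k}‖²) ≤ k^{2s}(c_k + d_k) holds, where a_k, b_k, c_k, d_k ≥ 0 and for all k ≥ m+1, c_{k-1} + d_{k-1} ≤ (1 + 1/ε_{k-1})(g_k + g_{-k}) + (1 + ε_{k-1})(a_{k+1} + b_{k+1}) with the choice ε_{k-2} = k^{2s}/(k-2)^{2s} - 1 for k ≥ m+2. If moreover (k-1)^{2s}(1 + 1/ε_{k-1})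 ≤ k^{2s+1}/(2s) and a_k, b_k → 0 faster than any polynomial as k → ∞, then Σ_{k=m}^∞ k^{2s+1}(‖u_k‖² + ‖u_{-k}‖²) ≤ (1/(κs)) Σ_{k=m+1}^∞ k^{2s+1}(g_k + g_{-k}). -/
/-!
With `B k = k^{2s} (a k + b k)`, multiply the splitting estimate at `k + 1` by `k^{2s}`: the choice
of `ε` makes `k^{2s} (1 + ε k) = (k + 2)^{2s}`, so together with the energy estimate at `k` it gives
`κ/2 · k^{2s+1} (‖u_k‖² + ‖u_{-k}‖²) ≤ (k+1)^{2s+1} (g_{k+1} + g_{-k-1}) / (2s) + (B (k + 2) - B k)`.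
Summed over `k ≥ m` the `B`-terms telescope in steps of two, leaving `-B m - B (m + 1) ≤ 0` and a
tail that vanishes because `a k + b k` decays faster than any power of `k`.
-/

open Filter Topology

theorem tendsto_rpow_mul_of_tendsto_pow_mul {f : ℕ → ℝ} (hf : ∀ k, 0 ≤ f k) {r : ℝ} {p : ℕ}
    (hrp : r ≤ p) (h : Tendsto (fun k : ℕ => (k : ℝ) ^ p * f k) atTop (𝓝 0)) :
    Tendsto (fun k : ℕ => (k : ℝ) ^ r * f k) atTop (𝓝 0) := by
  refine squeeze_zero' (.of_forall fun k => by have := hf k; positivity) ?_ h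
  filter_upwards [eventually_ge_atTop 1] with k hk
  gcongr
  · exact hf k
  · rw [← Real.rpow_natCast]
    exact Real.rpow_le_rpow_of_exponent_le (by exact_mod_cast hk) hrp

theorem tsum_le_tsum_sub_of_le_add_sub {U G A : ℕ → ℝ} (hU : ∀ i, 0 ≤ U i) (hG : Summable G)
    (hA : Tendsto A atTop (𝓝 0)) (h : ∀ i, U i ≤ G i + (A (i + 1) - A i)) :
    ∑' i, U i ≤ ∑' i, G i - A 0 := by
  refine Real.tsum_le_of_sum_range_le hU fun N => ?_
  have hlim : Tendsto (fun M => ∑ i ∈ Finset.range M, G i + (A M - A 0)) atTop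
      (𝓝 (∑' i, G i + (0 - A 0))) :=
    hG.hasSum.tendsto_sum_nat.add (hA.sub_const _)
  rw [zero_sub, ← sub_eq_add_neg] at hlim
  refine ge_of_tendsto hlim ?_
  filter_upwards [eventually_ge_atTop N] with M hM
  calc ∑ i ∈ Finset.range N, U i
      ≤ ∑ i ∈ Finset.range M, U i :=
        Finset.sum_le_sum_of_subset_of_nonneg (Finset.range_subset_range.2 hM) fun i _ _ => hU i
    _ ≤ ∑ i ∈ Finset.range M, (G i + (A (i + 1) - A i)) := Finset.sum_le_sum fun i _ => h i
    _ = ∑ i ∈ Finset.range M, G i + (A M - A 0) := by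
        rw [Finset.sum_add_distrib, Finset.sum_range_sub]

theorem tsum_nat_add_le_of_le_add_sub_two {X Y B : ℕ → ℝ} {m : ℕ} (hX : ∀ k, 0 ≤ X k)
    (hY : Summable Y) (hB : Tendsto B atTop (𝓝 0)) (hB₀ : 0 ≤ B m) (hB₁ : 0 ≤ B (m + 1))
    (h : ∀ k, m ≤ k → X k ≤ Y (k + 1) + (B (k + 2) - B k)) :
    ∑' j, X (m + j) ≤ ∑' j, Y (m + 1 + j) := by
  have hBm : Tendsto (fun j => B (m + j)) atTop (𝓝 0) :=
    hB.comp (tendsto_atTop_mono (Nat.le_add_left · m) tendsto_id)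
  have hBB : Tendsto (fun j => B (m + j) + B (m + j + 1)) atTop (𝓝 0) := by
    rw [← add_zero 0]
    exact hBm.add ((tendsto_add_atTop_iff_nat 1).2 hBm)
  have htel := tsum_le_tsum_sub_of_le_add_sub (fun j => hX (m + j))
    (((summable_nat_add_iff (m + 1)).2 hY).congr fun j => by rw [add_comm]) hBB fun j => ?_
  · simp only [add_zero] at htel
    linarith
  · have hj := h (m + j) (Nat.le_add_right m j)
    rw [show m + 1 + j = m + j + 1 by omega, ← add_assoc]
    rw [show m + j + 2 = m + j + 1 + 1 by omega] at hj
    linarith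

theorem le_mul_add_rpow_sub_rpow_of_split {x r ε P₀ P₂ Q E G W : ℝ} (hx : 0 < x) (hG : 0 ≤ G)
    (hε : ε = (x + 2) ^ r / x ^ r - 1) (hmain : x ^ r * P₀ + E ≤ x ^ r * Q)
    (hsplit : Q ≤ (1 + 1 / ε) * G + (1 + ε) * P₂) (hweight : x ^ r * (1 + 1 / ε) ≤ W) :
    E ≤ W * G + ((x + 2) ^ r * P₂ - x ^ r * P₀) := by
  have ht : 0 < x ^ r := Real.rpow_pos_of_pos hx r
  have hy : x ^ r * (1 + ε) = (x + 2) ^ r := by rw [hε]; field_simp; ring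
  calc E ≤ x ^ r * Q - x ^ r * P₀ := by linarith
    _ ≤ x ^ r * ((1 + 1 / ε) * G + (1 + ε) * P₂) - x ^ r * P₀ := by gcongr
    _ = x ^ r * (1 + 1 / ε) * G + ((x + 2) ^ r * P₂ - x ^ r * P₀) := by rw [← hy]; ring
    _ ≤ W * G + ((x + 2) ^ r * P₂ - x ^ r * P₀) := by gcongr

theorem stmt_14_general {H : Type*} [NormedAddCommGroup H]
    (u : ℤ → H) (a b c d : ℕ → ℝ) (g : ℤ → ℝ) (ε : ℕ → ℝ)
    (κ s : ℝ) (m : ℕ) (hκ : 0 < κ) (hs : 0 < s) (hm : 1 ≤ m)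
    (ha : ∀ k, 0 ≤ a k) (hb : ∀ k, 0 ≤ b k)
    (hg : ∀ k : ℤ, 0 ≤ g k)
    (hεdef : ∀ k, m ≤ k → ε k = ((k : ℝ) + 2) ^ (2 * s) / (k : ℝ) ^ (2 * s) - 1)
    (hmain : ∀ k, m ≤ k →
      (k : ℝ) ^ (2 * s) * (a k + b k)
        + κ / 2 * (k : ℝ) ^ (2 * s + 1) * (‖u (k : ℤ)‖ ^ 2 + ‖u (-(k : ℤ))‖ ^ 2)
      ≤ (k : ℝ) ^ (2 * s) * (c k + d k))
    (hsplit : ∀ k, m + 1 ≤ k →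
      c (k - 1) + d (k - 1)
        ≤ (1 + 1 / ε (k - 1)) * (g (k : ℤ) + g (-(k : ℤ)))
          + (1 + ε (k - 1)) * (a (k + 1) + b (k + 1)))
    (hweight : ∀ k, m + 1 ≤ k →
      ((k : ℝ) - 1) ^ (2 * s) * (1 + 1 / ε (k - 1)) ≤ (k : ℝ) ^ (2 * s + 1) / (2 * s))
    (hdecay : ∀ p : ℕ, Tendsto (fun k : ℕ => (k : ℝ) ^ p * (a k + b k)) atTop (nhds 0))
    (hgsum : Summable (fun k : ℕ => (k : ℝ) ^ (2 * s + 1) * (g (k : ℤ) + g (-(k : ℤ))))) :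
    (∑' j : ℕ, ((m + j : ℕ) : ℝ) ^ (2 * s + 1)
        * (‖u ((m + j : ℕ) : ℤ)‖ ^ 2 + ‖u (-((m + j : ℕ) : ℤ))‖ ^ 2))
      ≤ 1 / (κ * s) * ∑' j : ℕ, ((m + 1 + j : ℕ) : ℝ) ^ (2 * s + 1)
        * (g ((m + 1 + j : ℕ) : ℤ) + g (-((m + 1 + j : ℕ) : ℤ))) := by
  have hB : Tendsto (fun k : ℕ => (k : ℝ) ^ (2 * s) * (a k + b k)) atTop (𝓝 0) :=
    tendsto_rpow_mul_of_tendsto_pow_mul (fun k => add_nonneg (ha k) (hb k)) (Nat.le_ceil _)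
      (hdecay _)
  have hstep : ∀ k, m ≤ k →
      κ / 2 * ((k : ℝ) ^ (2 * s + 1) * (‖u (k : ℤ)‖ ^ 2 + ‖u (-(k : ℤ))‖ ^ 2))
        ≤ ((k + 1 : ℕ) : ℝ) ^ (2 * s + 1) * (g ((k + 1 : ℕ) : ℤ) + g (-((k + 1 : ℕ) : ℤ)))
            / (2 * s)
          + (((k + 2 : ℕ) : ℝ) ^ (2 * s) * (a (k + 2) + b (k + 2))
            - (k : ℝ) ^ (2 * s) * (a k + b k)) := by
    intro k hk
    have hsplit' := hsplit (k + 1) (by omega)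
    have hweight' := hweight (k + 1) (by omega)
    simp only [Nat.add_sub_cancel, Nat.cast_add, Nat.cast_one, add_sub_cancel_right] at hsplit' hweight'
    have := le_mul_add_rpow_sub_rpow_of_split (by exact_mod_cast (by omega : 0 < k)) (add_nonneg (hg _) (hg _))
      (hεdef k hk) (hmain k hk) hsplit' hweight'
    push_cast
    convert this using 1 <;> ring
  have hsum := tsum_nat_add_le_of_le_add_sub_two
    (X := fun k : ℕ => κ / 2 * ((k : ℝ) ^ (2 * s + 1) * (‖u (k : ℤ)‖ ^ 2 + ‖u (-(k : ℤ))‖ ^ 2)))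
    (fun k => by positivity) (hgsum.div_const (2 * s)) hB
    (mul_nonneg (by positivity) (add_nonneg (ha _) (hb _)))
    (mul_nonneg (by positivity) (add_nonneg (ha _) (hb _))) hstep
  rw [tsum_mul_left, tsum_div_const, le_div_iff₀ (by positivity)] at hsum
  rw [one_div_mul_eq_div, le_div_iff₀ (by positivity)]
  linarith

/-- Abstract summation/telescoping argument behind the Carleman estimate (Theorem 3.1):
with `a_k = ‖μ₋u_k‖²`, `b_k = ‖μ₊u_{-k}‖²`, `c_k = ‖μ₊u_k‖²`, `d_k = ‖μ₋u_{-k}‖²`,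
`g_k = ‖(G_E u)_k‖²`, the termwise estimates with the weight choice
`ε_{k-2} = k^{2s}/(k-2)^{2s} - 1`, the bound `(k-1)^{2s}(1+1/ε_{k-1}) ≤ k^{2s+1}/(2s)`, and
superpolynomial decay of the boundary terms yield
`Σ_{k=m}^∞ k^{2s+1}(‖u_k‖² + ‖u_{-k}‖²) ≤ (1/(κs)) Σ_{k=m+1}^∞ k^{2s+1}(g_k + g_{-k})`. -/
theorem stmt_14 {H : Type*} [NormedAddCommGroup H] [InnerProductSpace ℂ H]
    (u : ℤ → H) (a b c d : ℕ → ℝ) (g : ℤ → ℝ) (ε : ℕ → ℝ)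
    (κ s : ℝ) (m : ℕ) (hκ : 0 < κ) (hs : 0 < s) (hm : 1 ≤ m)
    (ha : ∀ k, 0 ≤ a k) (hb : ∀ k, 0 ≤ b k) (hc : ∀ k, 0 ≤ c k) (hd : ∀ k, 0 ≤ d k)
    (hg : ∀ k : ℤ, 0 ≤ g k)
    (hεdef : ∀ k, m ≤ k → ε k = ((k : ℝ) + 2) ^ (2 * s) / (k : ℝ) ^ (2 * s) - 1)
    (hmain : ∀ k, m ≤ k →
      (k : ℝ) ^ (2 * s) * (a k + b k)
        + κ / 2 * (k : ℝ) ^ (2 * s + 1) * (‖u (k : ℤ)‖ ^ 2 + ‖u (-(k : ℤ))‖ ^ 2)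
      ≤ (k : ℝ) ^ (2 * s) * (c k + d k))
    (hsplit : ∀ k, m + 1 ≤ k →
      c (k - 1) + d (k - 1)
        ≤ (1 + 1 / ε (k - 1)) * (g (k : ℤ) + g (-(k : ℤ)))
          + (1 + ε (k - 1)) * (a (k + 1) + b (k + 1)))
    (hweight : ∀ k, m + 1 ≤ k →
      ((k : ℝ) - 1) ^ (2 * s) * (1 + 1 / ε (k - 1)) ≤ (k : ℝ) ^ (2 * s + 1) / (2 * s))
    (hdecay : ∀ p : ℕ, Tendsto (fun k : ℕ => (k : ℝ) ^ p * (a k + b k)) atTop (nhds 0))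
    (hgsum : Summable (fun k : ℕ => (k : ℝ) ^ (2 * s + 1) * (g (k : ℤ) + g (-(k : ℤ))))) :
    (∑' j : ℕ, ((m + j : ℕ) : ℝ) ^ (2 * s + 1)
        * (‖u ((m + j : ℕ) : ℤ)‖ ^ 2 + ‖u (-((m + j : ℕ) : ℤ))‖ ^ 2))
      ≤ 1 / (κ * s) * ∑' j : ℕ, ((m + 1 + j : ℕ) : ℝ) ^ (2 * s + 1)
        * (g ((m + 1 + j : ℕ) : ℤ) + g (-((m + 1 + j : ℕ) : ℤ))) :=
  stmt_14_general u a b c d g ε κ s m hκ hs hm ha hb hg hεdef hmain hsplit hweight hdecay hgsum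
end

section
/- Let H be a complex Hilbert space and let μ₊, μ₋ be densely defined operators with μ₊* = -μ₋ + iλ₋ and μ₋* = -μ₊ - iλ₊ (where λ_± denote bounded multiplication operators with λ₊ = conj(λ₋)), satisfying the commutation relation [μ₊,μ₋]u = (i/2)K_E V u - iλ₋μ₊u - iλ₊μ₋u on a domain where Vu = iku. Then for any such u, ‖μ₊u‖² = ‖μ₋u‖² - (k/2)⟨K_E u, u⟩. -/
/-! Pairing with `u` turns `‖μ₊u‖² - ‖μ₋u‖²` into `⟪u, (μ₊*μ₊ - μ₋*μ₋) u⟫`; the adjoint relations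
make `μ₊*μ₊ - μ₋*μ₋` equal to `[μ₊, μ₋] + iλ₋μ₊ + iλ₊μ₋`, which the commutator relation reduces to
`(i/2) K_E V`, i.e. to `-(k/2) K_E` on the `k`-th mode. Since the left side is real, so is
`-(k/2)⟪u, K_E u⟫`, and it may be replaced by its conjugate `-(k/2)⟪K_E u, u⟫`. -/

open ContinuousLinearMap Complex

section Adjoint

variable {𝕜 H : Type*} [RCLike 𝕜] [NormedAddCommGroup H] [InnerProductSpace 𝕜 H]
  [CompleteSpace H]

theorem norm_apply_sq_eq_inner_adjoint_apply (T : H →L[𝕜] H) (u : H) :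
    ((‖T u‖ : 𝕜) ^ 2) = inner 𝕜 u (adjoint T (T u)) := by
  rw [adjoint_inner_right, inner_self_eq_norm_sq_to_K]

theorem norm_apply_sq_sub_norm_apply_sq_of_adjoint_eq {A B L L' : H →L[𝕜] H} (c : 𝕜)
    (hA : adjoint A = -B + c • L) (hB : adjoint B = -A - c • L') (u : H) :
    (‖A u‖ : 𝕜) ^ 2 - (‖B u‖ : 𝕜) ^ 2
      = inner 𝕜 u (A (B u) - B (A u) + c • L (A u) + c • L' (B u)) := by
  rw [norm_apply_sq_eq_inner_adjoint_apply, norm_apply_sq_eq_inner_adjoint_apply, hA, hB,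
    ← inner_sub_right]
  congr 1
  simp only [add_apply, sub_apply, neg_apply, smul_apply]
  abel

end Adjoint

theorem stmt_17_general {H : Type*} [NormedAddCommGroup H] [InnerProductSpace ℂ H] [CompleteSpace H]
    (μp μm KE V lm lp : H →L[ℂ] H)
    (hadj1 : ContinuousLinearMap.adjoint μp = -μm + Complex.I • lm)
    (hadj2 : ContinuousLinearMap.adjoint μm = -μp - Complex.I • lp)
    (hcomm : ∀ w : H, μp (μm w) - μm (μp w)
      = (Complex.I / 2) • KE (V w) - Complex.I • lm (μp w) - Complex.I • lp (μm w))
    (u : H) (k : ℤ) (hu : V u = (k : ℂ) • Complex.I • u) :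
    (‖μp u‖ ^ 2 : ℂ) = (‖μm u‖ ^ 2 : ℂ) - ((k : ℂ) / 2) * inner ℂ (KE u) u := by
  have hmode :
      μp (μm u) - μm (μp u) + I • lm (μp u) + I • lp (μm u) = (-(k : ℂ) / 2) • KE u := by
    rw [hcomm, hu, map_smul, map_smul, smul_smul, smul_smul]
    have hscalar : I / 2 * k * I = -(k : ℂ) / 2 := by linear_combination (k : ℂ) / 2 * I_mul_I
    rw [hscalar]
    abel
  have hdiff := norm_apply_sq_sub_norm_apply_sq_of_adjoint_eq I hadj1 hadj2 u
  rw [hmode, inner_smul_right] at hdiff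
  have hdiff_conj := congrArg (starRingEnd ℂ) hdiff
  simp only [map_sub, map_pow, RCLike.conj_ofReal, map_mul, map_div₀, map_neg, map_intCast,
    map_ofNat, inner_conj_symm] at hdiff_conj
  linear_combination hdiff_conj

/-- Guillemin–Kazhdan-type energy identity (Proposition 3.2), abstract operator form: if
`μ₊* = -μ₋ + iλ₋`, `μ₋* = -μ₊ - iλ₊` with `λ₊ = conj(λ₋)` (as multiplication operators,
`λ₊ = λ₋*`), and `[μ₊,μ₋]u = (i/2)K_E Vu - iλ₋μ₊u - iλ₊μ₋u`, then for `u` in the `k`-th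
vertical Fourier mode (`Vu = iku`) one has `‖μ₊u‖² = ‖μ₋u‖² - (k/2)⟨K_E u, u⟩`. -/
theorem stmt_17 {H : Type*} [NormedAddCommGroup H] [InnerProductSpace ℂ H] [CompleteSpace H]
    (μp μm KE V lm lp : H →L[ℂ] H)
    (hconj : ContinuousLinearMap.adjoint lm = lp)
    (hadj1 : ContinuousLinearMap.adjoint μp = -μm + Complex.I • lm)
    (hadj2 : ContinuousLinearMap.adjoint μm = -μp - Complex.I • lp)
    (hcomm : ∀ w : H, μp (μm w) - μm (μp w)
      = (Complex.I / 2) • KE (V w) - Complex.I • lm (μp w) - Complex.I • lp (μm w))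
    (u : H) (k : ℤ) (hu : V u = (k : ℂ) • Complex.I • u) :
    (‖μp u‖ ^ 2 : ℂ) = (‖μm u‖ ^ 2 : ℂ) - ((k : ℂ) / 2) * inner ℂ (KE u) u :=
  stmt_17_general μp μm KE V lm lp hadj1 hadj2 hcomm u k hu
end
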